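/- For every n ≥ 1 and every ordinal α > 1, the function β ↦ ⟨α,β⟩_n is left cancellative: for all ordinals β and γ, if ⟨α,β⟩_n = ⟨α,γ⟩_n then β = γ. -/

import Mathlib

open Ordinal

/-- The head of the Cantor Normal Form of `β` (for `β ≠ 0`): `ω ^ β₁`. -/
noncomputable def cnfHead (β : Ordinal) : Ordinal := ω ^ Ordinal.log ω β

/-- The tail of the Cantor Normal Form of `β`: `ω ^ β₂ + ⋯ + ω ^ β_k`. -/
noncomputable def cnfTail (β : Ordinal) : Ordinal := β - cnfHead β

theorem cnfHead_le {β : Ordinal} (hβ : β ≠ 0) : cnfHead β ≤ β :=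
  Ordinal.opow_log_le_self ω hβ

theorem cnfTail_lt {β : Ordinal} (hβ : β ≠ 0) : cnfTail β < β := by
  refine (Ordinal.sub_le_self β _).lt_of_ne fun h => ?_
  have h1 : cnfHead β + β = β := by
    have h2 := Ordinal.add_sub_cancel_of_le (cnfHead_le hβ)
    rwa [show β - cnfHead β = β from h] at h2
  have h2 : cnfHead β * ω ≤ β := Ordinal.add_eq_right_iff_mul_omega0_le.1 h1
  have h3 : β < ω ^ Order.succ (Ordinal.log ω β) :=
    Ordinal.lt_opow_succ_log_self Ordinal.one_lt_omega0 β
  rw [Ordinal.opow_succ] at h3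
  exact lt_irrefl β (h3.trans_le h2)

/-- Auxiliary step: given the previous operation `prev = ⟨-,-⟩_{n-1}` and the value `z`
at `β = 0`, produce `⟨α, -⟩_n` by transfinite recursion via the CNF of `β`. -/
noncomputable def ordOpAux (prev : Ordinal → Ordinal → Ordinal) (z : Ordinal)
    (α : Ordinal) : Ordinal → Ordinal :=
  WellFounded.fix Ordinal.lt_wf fun β IH =>
    if hβ0 : β = 0 then z                      -- k = 0
    else if β = 1 then α                       -- k = 1, β = 1
    else if hp : cnfHead β = β then            -- k = 1, β > 1 (additive principal limit)
      ⨆ γ : Set.Iio β, IH γ.1 γ.2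
    else                                       -- k ≥ 2
      prev (IH (cnfHead β) ((cnfHead_le hβ0).lt_of_ne hp))
           (IH (cnfTail β) (cnfTail_lt hβ0))

/-- The ordinal operations `⟨α, β⟩ₙ` of the paper (`n ≥ 1`; the value at `n = 0` is junk). -/
noncomputable def ordOp : ℕ → Ordinal → Ordinal → Ordinal
  | 0 => fun _ _ => 0
  | 1 => fun α β => α + β
  | 2 => fun α => ordOpAux (ordOp 1) 0 α
  | (n + 3) => fun α => ordOpAux (ordOp (n + 2)) 1 α

/-! In fact `β ↦ ⟨α, β⟩ₙ` is strictly increasing, by induction on `n` and, inside, by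
transfinite induction on `β`; of `⟨-, -⟩ₙ₋₁` we only need strict monotonicity in the right
argument and `a < ⟨a, b⟩ₙ₋₁` for `a, b > 1` (which follows from `a ≤ ⟨a, 1⟩ₙ₋₁`).
If `β = ω ^ β₁ > 1`, then `⟨α, β⟩ₙ` is a supremum over all `γ < β` and exceeds `⟨α, γ⟩ₙ`
because `γ + 1 < β`. Otherwise `β = H + T` with head `H` and tail `T ≠ 0`: for `γ ≤ H`,
`⟨α, γ⟩ₙ ≤ ⟨α, H⟩ₙ < ⟨⟨α, H⟩ₙ, ⟨α, T⟩ₙ⟩ₙ₋₁`, while every `γ ∈ (H, β)` has head `H` and a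
tail smaller than `T`. -/

section Cnf

variable {β γ : Ordinal}

theorem cnfHead_one : cnfHead 1 = 1 := by
  rw [cnfHead, log_one_right, opow_zero]

theorem cnfHead_ne_zero (β : Ordinal) : cnfHead β ≠ 0 :=
  opow_ne_zero _ omega0_ne_zero

theorem cnfHead_add_cnfTail (hβ : β ≠ 0) : cnfHead β + cnfTail β = β :=
  Ordinal.add_sub_cancel_of_le (cnfHead_le hβ)

theorem cnfTail_ne_zero (hβ : β ≠ 0) (hp : cnfHead β ≠ β) : cnfTail β ≠ 0 := by
  intro h
  apply hp
  simpa [h] using cnfHead_add_cnfTail hβ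

theorem add_one_lt_of_cnfHead_eq (hp : cnfHead β = β) (hβ : 1 < β)
    (hγ : γ < β) : γ + 1 < β := by
  rw [← hp] at hγ hβ ⊢
  exact isPrincipal_add_omega0_opow _ hγ hβ

theorem cnfHead_eq_of_cnfHead_lt (hγ : cnfHead β < γ) (hγβ : γ ≤ β) :
    cnfHead γ = cnfHead β := by
  have hγ0 : γ ≠ 0 := hγ.ne_bot
  refine congrArg (ω ^ ·) (le_antisymm (log_mono_right ω hγβ) ?_)
  exact (opow_le_iff_le_log one_lt_omega0 hγ0).1 hγ.le

theorem cnfTail_lt_cnfTail (hγ : cnfHead β < γ) (hγβ : γ < β) :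
    cnfTail γ < cnfTail β := by
  have hγ0 : γ ≠ 0 := hγ.ne_bot
  have hβ0 : β ≠ 0 := (hγ.trans hγβ).ne_bot
  have hhead := cnfHead_eq_of_cnfHead_lt hγ hγβ.le
  rwa [← cnfHead_add_cnfTail hγ0, ← cnfHead_add_cnfTail hβ0, hhead, add_lt_add_iff_left] at hγβ

end Cnf

section OrdOpAux

variable {prev : Ordinal → Ordinal → Ordinal} {z α β : Ordinal}

theorem ordOpAux_eq :
    ordOpAux prev z α β =
      if β = 0 then z
      else if β = 1 then α
      else if cnfHead β = β then ⨆ γ : Set.Iio β, ordOpAux prev z α γ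
      else prev (ordOpAux prev z α (cnfHead β)) (ordOpAux prev z α (cnfTail β)) := by
  rw [ordOpAux, WellFounded.fix_eq]
  simp only [dite_eq_ite]

@[simp]
theorem ordOpAux_zero : ordOpAux prev z α 0 = z := by
  simp [ordOpAux_eq]

@[simp]
theorem ordOpAux_one : ordOpAux prev z α 1 = α := by
  simp [ordOpAux_eq]

theorem ordOpAux_of_cnfHead_eq (hβ : 1 < β) (hp : cnfHead β = β) :
    ordOpAux prev z α β = ⨆ γ : Set.Iio β, ordOpAux prev z α γ := by
  rw [ordOpAux_eq, if_neg (zero_lt_one.trans hβ).ne', if_neg hβ.ne', if_pos hp]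

theorem ordOpAux_of_cnfHead_ne (hβ0 : β ≠ 0) (hp : cnfHead β ≠ β) :
    ordOpAux prev z α β = prev (ordOpAux prev z α (cnfHead β)) (ordOpAux prev z α (cnfTail β)) := by
  have hβ1 : β ≠ 1 := by rintro rfl; exact hp cnfHead_one
  rw [ordOpAux_eq, if_neg hβ0, if_neg hβ1, if_neg hp]

end OrdOpAux

section StrictMono

universe u

-- `ordOpAux` lets `β` range over another universe, where the supremum `⨆ γ : Set.Iio β` is junk.
variable {prev : Ordinal.{u} → Ordinal.{u} → Ordinal.{u}} {z α β γ : Ordinal.{u}}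

theorem le_ordOpAux_of_strictMonoOn (hf : StrictMonoOn (ordOpAux prev z α) (Set.Iio β))
    (hγ0 : γ ≠ 0) (hγβ : γ < β) : α ≤ ordOpAux prev z α γ := by
  have hγ1 : 1 ≤ γ := Order.one_le_iff_ne_zero.2 hγ0
  simpa using hf.monotoneOn (hγ1.trans_lt hγβ) hγβ hγ1

theorem ordOpAux_lt_of_cnfHead_eq (hβ : 1 < β) (hp : cnfHead β = β)
    (hf : StrictMonoOn (ordOpAux prev z α) (Set.Iio β)) (hγ : γ < β) :
    ordOpAux prev z α γ < ordOpAux prev z α β := by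
  have hγ1 : γ + 1 < β := add_one_lt_of_cnfHead_eq hp hβ hγ
  rw [ordOpAux_of_cnfHead_eq hβ hp]
  calc ordOpAux prev z α γ < ordOpAux prev z α (γ + 1) := hf hγ hγ1 (lt_add_one γ)
    _ ≤ ⨆ δ : Set.Iio β, ordOpAux prev z α δ :=
      Ordinal.le_iSup (fun δ : Set.Iio β => ordOpAux prev z α δ) ⟨γ + 1, hγ1⟩

theorem ordOpAux_lt_of_cnfHead_ne (hα : 1 < α) (hmono : ∀ a, 1 < a → StrictMono (prev a))
    (hlt : ∀ a b, 1 < a → 1 < b → a < prev a b) (hβ0 : β ≠ 0) (hp : cnfHead β ≠ β)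
    (hf : StrictMonoOn (ordOpAux prev z α) (Set.Iio β)) (hγ : γ < β) :
    ordOpAux prev z α γ < ordOpAux prev z α β := by
  set f := ordOpAux prev z α
  set H := cnfHead β
  set T := cnfTail β
  have hHβ : H < β := (cnfHead_le hβ0).lt_of_ne hp
  have hTβ : T < β := cnfTail_lt hβ0
  have hfH : 1 < f H := hα.trans_le (le_ordOpAux_of_strictMonoOn hf (cnfHead_ne_zero β) hHβ)
  have hfT : 1 < f T := hα.trans_le (le_ordOpAux_of_strictMonoOn hf (cnfTail_ne_zero hβ0 hp) hTβ)
  rw [show f β = prev (f H) (f T) from ordOpAux_of_cnfHead_ne hβ0 hp]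
  rcases le_or_gt γ H with hγH | hHγ
  · calc f γ ≤ f H := hf.monotoneOn (hγH.trans_lt hHβ) hHβ hγH
      _ < prev (f H) (f T) := hlt _ _ hfH hfT
  · have hhead : cnfHead γ = H := cnfHead_eq_of_cnfHead_lt hHγ hγ.le
    have htail : cnfTail γ < T := cnfTail_lt_cnfTail hHγ hγ
    have hγ0 : γ ≠ 0 := hHγ.ne_bot
    have hfγ : f γ = prev (f H) (f (cnfTail γ)) := by
      rw [← hhead]
      exact ordOpAux_of_cnfHead_ne hγ0 (hhead ▸ hHγ.ne)
    rw [hfγ]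
    exact hmono _ hfH (hf (htail.trans hTβ) hTβ htail)

theorem ordOpAux_strictMono (hα : 1 < α) (hz : z < α)
    (hmono : ∀ a, 1 < a → StrictMono (prev a)) (hlt : ∀ a b, 1 < a → 1 < b → a < prev a b) :
    StrictMono (ordOpAux prev z α : Ordinal.{u} → Ordinal.{u}) := by
  intro γ β hγ
  induction β using WellFoundedLT.induction generalizing γ with
  | ind β IH =>
  have hf : StrictMonoOn (ordOpAux prev z α) (Set.Iio β) := fun _ _ ε hε hδε => IH ε hε hδε
  obtain rfl | hβ1 := eq_or_ne β 1
  · simpa [Order.lt_one_iff.1 hγ] using hz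
  have hβ0 : β ≠ 0 := hγ.ne_bot
  by_cases hp : cnfHead β = β
  · exact ordOpAux_lt_of_cnfHead_eq ((Order.one_le_iff_ne_zero.2 hβ0).lt_of_ne hβ1.symm) hp hf hγ
  · exact ordOpAux_lt_of_cnfHead_ne hα hmono hlt hβ0 hp hf hγ

end StrictMono

theorem ordOp_add_two (m : ℕ) : ∃ z ≤ 1, ordOp (m + 2) = ordOpAux (ordOp (m + 1)) z := by
  rcases m with _ | m
  exacts [⟨0, zero_le_one, rfl⟩, ⟨1, le_rfl, rfl⟩]

theorem le_ordOp_one : ∀ {n : ℕ}, 1 ≤ n → ∀ a : Ordinal, a ≤ ordOp n a 1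
  | 1, _, a => le_self_add
  | m + 2, _, a => by
    obtain ⟨z, -, h⟩ := ordOp_add_two m
    rw [h, ordOpAux_one]

theorem ordOp_strictMono {n : ℕ} (hn : 1 ≤ n) {α : Ordinal} (hα : 1 < α) :
    StrictMono (ordOp n α) := by
  induction n, hn using Nat.le_induction generalizing α with
  | base => exact fun _ _ h => (add_lt_add_iff_left α).2 h
  | succ n hn IH =>
    obtain ⟨m, rfl⟩ : ∃ m, n = m + 1 := ⟨n - 1, by omega⟩
    obtain ⟨z, hz, h⟩ := ordOp_add_two m
    rw [h]
    refine ordOpAux_strictMono hα (hz.trans_lt hα) (fun a ha => IH ha) fun a b ha hb => ?_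
    calc a ≤ ordOp (m + 1) a 1 := le_ordOp_one hn a
      _ < ordOp (m + 1) a b := IH ha hb

/-- For every `n ≥ 1` and every ordinal `α > 1`, the function `β ↦ ⟨α, β⟩ₙ` is
left cancellative. -/
theorem ordOp_left_cancellative (n : ℕ) (hn : 1 ≤ n) (α : Ordinal) (hα : 1 < α) :
    ∀ β γ : Ordinal, ordOp n α β = ordOp n α γ → β = γ :=
  fun _ _ h => (ordOp_strictMono hn hα).injective h
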